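/- arXiv:2105.01593 — 3 statements merged into one kernel-verified Lean document; each statement's English description precedes it below -/
import Mathlib

section
/- Let (S, A, P, c, s_goal) be a stochastic shortest path instance in which every stationary deterministic policy is proper, and suppose there exist φ : S×A → ℝ^d, θ ∈ ℝ^d, and μ : S → ℝ^d such that c(s,a) = φ(s,a)ᵀθ and P(s'|s,a) = φ(s,a)ᵀμ(s') for all s ≠ s_goal. Define G_d : ℝ^d → ℝ^d by G_d w = θ + Σ_{s∈S} μ(s) · min_{a∈A} φ(s,a)ᵀ w. Then w* = θ + Σ_{s∈S} μ(s) J*(s) is a fixed point of G_d, and for every s ∈ S the optimal action π*(s) satisfies π*(s) ∈ argmin_{a∈A} φ(s,a)ᵀ w*. -/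
open Matrix BigOperators

theorem stmt_9 {S A : Type*} [Fintype S] [Fintype A] [Nonempty A] {d : ℕ}
    (sgoal : S) (P : S → A → S → ℝ) (c : S → A → ℝ)
    (J : S → ℝ) (Q : S → A → ℝ) (π : S → A)
    (φ : S → A → Fin d → ℝ) (θ : Fin d → ℝ) (μ : S → Fin d → ℝ)
    (hQ : ∀ s a, Q s a = c s a + ∑ s', P s a s' * J s')
    (hJ : ∀ s, J s = ⨅ a, Q s a)
    (hπ : ∀ s, Q s (π s) = ⨅ a, Q s a)
    (hc : ∀ s a, s ≠ sgoal → c s a = φ s a ⬝ᵥ θ)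
    (hP : ∀ s a s', s ≠ sgoal → P s a s' = φ s a ⬝ᵥ μ s')
    (hgoalφ : ∀ a, φ sgoal a = 0)
    (hgoalJ : J sgoal = 0) :
    (θ + ∑ s, (⨅ a, φ s a ⬝ᵥ (θ + ∑ s', J s' • μ s')) • μ s) =
      θ + ∑ s, J s • μ s ∧
    ∀ s, φ s (π s) ⬝ᵥ (θ + ∑ s', J s' • μ s') =
      ⨅ a, φ s a ⬝ᵥ (θ + ∑ s', J s' • μ s') := by
  set w : Fin d → ℝ := θ + ∑ s', J s' • μ s' with hw
  have hdot : ∀ s a, s ≠ sgoal → φ s a ⬝ᵥ w = Q s a := by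
    intro s a hs
    have : φ s a ⬝ᵥ w = φ s a ⬝ᵥ θ + ∑ s', J s' * (φ s a ⬝ᵥ μ s') := by
      simp only [hw, dotProduct, Pi.add_apply, Finset.sum_apply, Pi.smul_apply,
        smul_eq_mul, mul_add, Finset.sum_add_distrib, Finset.mul_sum]
      congr 1
      rw [Finset.sum_comm]
      apply Finset.sum_congr rfl
      intro s' _
      apply Finset.sum_congr rfl
      intro i _
      ring
    rw [this, hQ, hc s a hs]
    congr 1
    apply Finset.sum_congr rfl
    intro s' _
    rw [hP s a s' hs]; ring
  have hmin : ∀ s, (⨅ a, φ s a ⬝ᵥ w) = J s := by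
    intro s
    by_cases hs : s = sgoal
    · subst hs
      simp [hgoalφ, hgoalJ, ciInf_const]
    · rw [hJ s]
      exact iInf_congr fun a => hdot s a hs
  constructor
  · congr 1
    apply Finset.sum_congr rfl
    intro s _
    rw [hmin s]
  · intro s
    rw [hmin s]
    by_cases hs : s = sgoal
    · subst hs; simp [hgoalφ, hgoalJ]
    · rw [hdot s (π s) hs, hπ s, hJ s]
end

section
/- Let φ : S×A → ℝ^d, θ ∈ ℝ^d, μ : S → ℝ^d satisfy the SSP linearity assumption. Let φ₁,…,φ_{d'} be the distinct non-goal feature vectors, Φ = [φ₁ ⋯ φ_{d'}] ∈ ℝ^{d×d'}, and pad Φ with zero columns to get Ξ ∈ ℝ^{d×d''} for d'' ≥ d'. Let Ξ = R·Q̃ be an RQ decomposition with Q̃ ∈ ℝ^{d''×d''} orthogonal, and define new features φ̃(s,a) as the appropriate column of Q̃ (and 0 at the goal). Then φ̃(s,a), Rᵀθ, Rᵀμ(s') satisfy: c(s,a) = φ̃(s,a)ᵀRᵀθ, P(s'|s,a) = φ̃(s,a)ᵀRᵀμ(s'), ‖φ̃(s,a)‖₂ ≤ 1, ‖Rᵀθ‖₂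 ≤ √(d''), and ‖Σ_{s'} Rᵀμ(s') h(s')‖₂ ≤ √(d'')·‖h‖_∞ for all h ∈ ℝ^S. -/
open Matrix BigOperators

theorem stmt_11 {S A : Type*} [Fintype S] [Fintype A] [DecidableEq S] {d d'' : ℕ}
    (sgoal : S) (c : S → A → ℝ) (P : S → A → S → ℝ)
    (φ : S → A → Fin d → ℝ) (θ : Fin d → ℝ) (μ : S → Fin d → ℝ)
    (hc : ∀ s a, s ≠ sgoal → c s a = φ s a ⬝ᵥ θ)
    (hc01 : ∀ s a, s ≠ sgoal → c s a ∈ Set.Icc (0 : ℝ) 1)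
    (hPlin : ∀ s a s', s ≠ sgoal → P s a s' = φ s a ⬝ᵥ μ s')
    (hP0 : ∀ s a s', s ≠ sgoal → 0 ≤ P s a s')
    (hP1 : ∀ s a, s ≠ sgoal → ∑ s', P s a s' = 1)
    (hφnorm : ∀ s a, Real.sqrt (∑ i, φ s a i ^ 2) ≤ 1)
    (Ξ R : Matrix (Fin d) (Fin d'') ℝ) (Qt : Matrix (Fin d'') (Fin d'') ℝ)
    (hQt : Qt ∈ Matrix.orthogonalGroup (Fin d'') ℝ)
    (hRQ : Ξ = R * Qt)
    (ι : S → A → Fin d'')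
    (hι : ∀ s a, s ≠ sgoal → (fun i => Ξ i (ι s a)) = φ s a)
    (hcols : ∀ j : Fin d'', (∀ i, Ξ i j = 0) ∨
      ∃ s a, s ≠ sgoal ∧ (fun i => Ξ i j) = φ s a)
    (φt : S → A → Fin d'' → ℝ)
    (hφt : ∀ s a, φt s a = if s = sgoal then 0 else fun i => Qt i (ι s a)) :
    (∀ s a, s ≠ sgoal → c s a = φt s a ⬝ᵥ (Rᵀ *ᵥ θ)) ∧
    (∀ s a s', s ≠ sgoal → P s a s' = φt s a ⬝ᵥ (Rᵀ *ᵥ μ s')) ∧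
    (∀ s a, Real.sqrt (∑ i, φt s a i ^ 2) ≤ 1) ∧
    Real.sqrt (∑ i, (Rᵀ *ᵥ θ) i ^ 2) ≤ Real.sqrt d'' ∧
    (∀ h : S → ℝ, Real.sqrt (∑ i, (∑ s', (Rᵀ *ᵥ μ s') i * h s') ^ 2) ≤
      Real.sqrt d'' * ‖h‖) := by
  classical
  have hQ1 : Qtᵀ * Qt = 1 := by
    have := Matrix.mem_orthogonalGroup_iff' (Fin d'') ℝ |>.mp hQt
    simpa using this
  have hQ2 : Qt * Qtᵀ = 1 := by
    have := Matrix.mem_orthogonalGroup_iff (Fin d'') ℝ |>.mp hQt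
    simpa using this
  -- R applied to new features recovers old features
  have hRφ : ∀ s a, s ≠ sgoal → R *ᵥ φt s a = φ s a := by
    intro s a hs
    funext j
    have h1 : (R *ᵥ φt s a) j = ∑ k, R j k * Qt k (ι s a) := by
      simp [hφt, hs, Matrix.mulVec, dotProduct]
    rw [h1]
    have h2 : ∑ k, R j k * Qt k (ι s a) = (R * Qt) j (ι s a) := by
      simp [Matrix.mul_apply]
    rw [h2, ← hRQ]
    exact congrFun (hι s a hs) j
  have hdot : ∀ (v : Fin d'' → ℝ) (w : Fin d → ℝ), v ⬝ᵥ (Rᵀ *ᵥ w) = (R *ᵥ v) ⬝ᵥ w := by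
    intro v w
    rw [Matrix.dotProduct_mulVec, Matrix.vecMul_transpose]
  -- Rᵀ = Qt * Ξᵀ
  have hR : R = Ξ * Qtᵀ := by
    rw [hRQ, Matrix.mul_assoc, hQ2, Matrix.mul_one]
  have hRT : Rᵀ = Qt * Ξᵀ := by
    rw [hR, Matrix.transpose_mul, Matrix.transpose_transpose]
  -- orthogonal matrices preserve the sum of squares
  have key : ∀ v : Fin d'' → ℝ, ∑ i, (Qt *ᵥ v) i ^ 2 = ∑ i, v i ^ 2 := by
    intro v
    have h1 : ∑ i, (Qt *ᵥ v) i ^ 2 = (Qt *ᵥ v) ⬝ᵥ (Qt *ᵥ v) := by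
      simp [dotProduct, sq]
    have h2 : v ⬝ᵥ ((Qtᵀ * Qt) *ᵥ v) = (Qt *ᵥ v) ⬝ᵥ (Qt *ᵥ v) := by
      rw [← Matrix.mulVec_mulVec, Matrix.dotProduct_mulVec, Matrix.vecMul_transpose]
    rw [h1, ← h2, hQ1]
    simp [dotProduct, sq]
  -- bound on entries of Ξᵀ *ᵥ θ
  have hθentry : ∀ j, (Ξᵀ *ᵥ θ) j ^ 2 ≤ 1 := by
    intro j
    have hentry : (Ξᵀ *ᵥ θ) j = (fun i => Ξ i j) ⬝ᵥ θ := by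
      simp [Matrix.mulVec, dotProduct, Matrix.transpose_apply]
    rcases hcols j with h0 | ⟨s, a, hs, hcol⟩
    · rw [hentry]
      simp [dotProduct, h0]
    · rw [hentry, hcol, ← hc s a hs]
      obtain ⟨h1, h2⟩ := hc01 s a hs
      nlinarith
  refine ⟨?_, ?_, ?_, ?_, ?_⟩
  · intro s a hs
    rw [hdot, hRφ s a hs, hc s a hs]
  · intro s a s' hs
    rw [hdot, hRφ s a hs, hPlin s a s' hs]
  · intro s a
    by_cases hs : s = sgoal
    · simp [hφt, hs]
    · have hcol : ∑ i, φt s a i ^ 2 = (Qtᵀ * Qt) (ι s a) (ι s a) := by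
        simp [hφt, hs, Matrix.mul_apply, Matrix.transpose_apply, sq]
      rw [hcol, hQ1]
      simp
  · have hv : Rᵀ *ᵥ θ = Qt *ᵥ (Ξᵀ *ᵥ θ) := by
      rw [hRT, Matrix.mulVec_mulVec]
    rw [hv, key]
    refine Real.sqrt_le_sqrt ?_
    calc ∑ j, (Ξᵀ *ᵥ θ) j ^ 2 ≤ ∑ j : Fin d'', (1 : ℝ) :=
          Finset.sum_le_sum fun j _ => hθentry j
      _ = d'' := by simp
  · intro h
    set v : Fin d → ℝ := fun k => ∑ s', μ s' k * h s' with hvdef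
    have hswap : ∀ i, (∑ s', (Rᵀ *ᵥ μ s') i * h s') = (Rᵀ *ᵥ v) i := by
      intro i
      simp only [Matrix.mulVec, dotProduct, hvdef, Finset.mul_sum, Finset.sum_mul]
      rw [Finset.sum_comm]
      congr 1; ext s'; congr 1; ext k; ring
    have hrw : (∑ i, (∑ s', (Rᵀ *ᵥ μ s') i * h s') ^ 2) = ∑ i, (Qt *ᵥ (Ξᵀ *ᵥ v)) i ^ 2 := by
      congr 1; ext i
      rw [hswap i, hRT, Matrix.mulVec_mulVec]
    rw [hrw, key]
    have hentry : ∀ j, (Ξᵀ *ᵥ v) j ^ 2 ≤ ‖h‖ ^ 2 := by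
      intro j
      have he : (Ξᵀ *ᵥ v) j = (fun i => Ξ i j) ⬝ᵥ v := by
        simp [Matrix.mulVec, dotProduct, Matrix.transpose_apply]
      rcases hcols j with h0 | ⟨s, a, hs, hcol⟩
      · have hz : (fun i => Ξ i j) ⬝ᵥ v = 0 := by simp [dotProduct, h0]
        rw [he, hz]
        simpa using sq_nonneg ‖h‖
      · have he2 : (Ξᵀ *ᵥ v) j = ∑ s', P s a s' * h s' := by
          rw [he, hcol]
          simp only [dotProduct, hvdef, Finset.mul_sum]
          rw [Finset.sum_comm]
          refine Finset.sum_congr rfl fun s' _ => ?_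
          rw [hPlin s a s' hs, dotProduct, Finset.sum_mul]
          exact Finset.sum_congr rfl fun k _ => by ring
        rw [he2]
        have habs : |∑ s', P s a s' * h s'| ≤ ‖h‖ := by
          calc |∑ s', P s a s' * h s'| ≤ ∑ s', |P s a s' * h s'| :=
                Finset.abs_sum_le_sum_abs _ _
            _ ≤ ∑ s', P s a s' * ‖h‖ := by
                refine Finset.sum_le_sum fun s' _ => ?_
                rw [abs_mul, abs_of_nonneg (hP0 s a s' hs)]
                refine mul_le_mul_of_nonneg_left ?_ (hP0 s a s' hs)
                simpa using norm_le_pi_norm h s'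
            _ = ‖h‖ := by rw [← Finset.sum_mul, hP1 s a hs, one_mul]
        calc (∑ s', P s a s' * h s') ^ 2 = |∑ s', P s a s' * h s'| ^ 2 := (sq_abs _).symm
          _ ≤ ‖h‖ ^ 2 := by
              exact pow_le_pow_left₀ (abs_nonneg _) habs 2
    calc Real.sqrt (∑ j, (Ξᵀ *ᵥ v) j ^ 2) ≤ Real.sqrt (∑ j : Fin d'', ‖h‖ ^ 2) :=
          Real.sqrt_le_sqrt (Finset.sum_le_sum fun j _ => hentry j)
      _ = Real.sqrt d'' * ‖h‖ := by
          rw [Finset.sum_const, Finset.card_univ, Fintype.card_fin, nsmul_eq_mul]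
          rw [Real.sqrt_mul (by positivity), Real.sqrt_sq (norm_nonneg _)]
end

section
/- Under the orthonormal-features setting (each feature vector φ(s,a) equals some element of an orthonormal set {q_i}_{i=1}^d), the empirical operator Ĝ with regularizer λ ≥ 1 is a (t/(t+λ))-contraction in the norm ‖Q̃ᵀ·‖_∞: for all w₁, w₂ ∈ ℝ^d, ‖Q̃ᵀ(Ĝw₁ − Ĝw₂)‖_∞ ≤ (t/(t+λ))·‖Q̃ᵀ(w₁ − w₂)‖_∞, provided the per-state nonlinearity g satisfies |g(s,w₁) − g(s,w₂)| ≤ ‖Q̃ᵀ(w₁ − w₂)‖_∞ for every s. -/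
/-!
Orthonormality makes each `q i` an eigenvector of the symmetric positive definite matrix
`Λ = λ • 1 + ∑ τ, φ τ φ τᵀ`, with eigenvalue `λ + dᵢ`. Hence the `i`-th coordinate of `Ĝw` is
`(λ + dᵢ)⁻¹ ∑_{τ : φ τ = q i} (c τ + g (s' τ) w)`. In `Ĝw₁ - Ĝw₂` the costs cancel and each of
the `dᵢ` remaining terms is at most `‖Q̃ᵀ(w₁ - w₂)‖_∞`, which gives the factor
`dᵢ / (dᵢ + λ) ≤ t / (t + λ)`.
-/

open Matrix BigOperators

open Finset

namespace Matrix

variable {n : Type*} [Fintype n] [DecidableEq n] {K : Type*} [Field K]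

theorem inv_mulVec_of_mulVec_eq_smul {A : Matrix n n K} (hA : IsUnit A) {v : n → K} {c : K}
    (hv : A *ᵥ v = c • v) : A⁻¹ *ᵥ v = c⁻¹ • v := by
  have hcv : c • (A⁻¹ *ᵥ v) = v := by
    rw [← mulVec_smul, ← hv, mulVec_mulVec, nonsing_inv_mul A ((isUnit_iff_isUnit_det A).mp hA),
      one_mulVec]
  rcases eq_or_ne c 0 with rfl | hc
  · have hv0 : v = 0 := by rw [← hcv, zero_smul]
    simp [hv0]
  · rw [← hcv, smul_smul, inv_mul_cancel₀ hc, one_smul, hcv]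

theorem dotProduct_inv_mulVec_of_mulVec_eq_smul {A : Matrix n n K} (hA : IsUnit A)
    (hAs : A.IsSymm) {v : n → K} {c : K} (hv : A *ᵥ v = c • v) (y : n → K) :
    v ⬝ᵥ (A⁻¹ *ᵥ y) = c⁻¹ * (v ⬝ᵥ y) := by
  have hvA : v ᵥ* A⁻¹ = A⁻¹ *ᵥ v := by rw [← vecMul_transpose, hAs.inv.eq]
  rw [dotProduct_mulVec, hvA, inv_mulVec_of_mulVec_eq_smul hA hv, smul_dotProduct, smul_eq_mul]

theorem posDef_smul_one_add_sum_vecMulVec {T : Type*} [Fintype T] {lam : ℝ} (hlam : 0 < lam)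
    (φ : T → n → ℝ) : (lam • (1 : Matrix n n ℝ) + ∑ τ, vecMulVec (φ τ) (φ τ)).PosDef :=
  (PosDef.one.smul hlam).add_posSemidef
    (posSemidef_sum _ fun τ _ => by simpa using posSemidef_vecMulVec_self_star (φ τ))

end Matrix

section OrthonormalFeatures

variable {n κ T : Type*} [Fintype n] [DecidableEq κ] [Fintype T] {q : κ → n → ℝ}

theorem dotProduct_sum_smul_of_orthonormal
    (hq : ∀ i j, q i ⬝ᵥ q j = if i = j then (1 : ℝ) else 0) (ι : T → κ) (a : T → ℝ) (i : κ) :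
    q i ⬝ᵥ ∑ τ, a τ • q (ι τ) = ∑ τ with ι τ = i, a τ := by
  rw [dotProduct_sum, sum_filter]
  refine sum_congr rfl fun τ _ => ?_
  simp [dotProduct_smul, hq, eq_comm]

theorem smul_one_add_sum_vecMulVec_mulVec_of_orthonormal [DecidableEq n]
    (hq : ∀ i j, q i ⬝ᵥ q j = if i = j then (1 : ℝ) else 0) (ι : T → κ) (lam : ℝ) (i : κ) :
    (lam • (1 : Matrix n n ℝ) + ∑ τ, vecMulVec (q (ι τ)) (q (ι τ))) *ᵥ q i
      = (lam + #{τ | ι τ = i}) • q i := by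
  have hsum : ∀ τ, vecMulVec (q (ι τ)) (q (ι τ)) *ᵥ q i = if ι τ = i then q i else 0 := by
    intro τ
    rw [vecMulVec_mulVec, op_smul_eq_smul, hq]
    split_ifs with h <;> simp [h]
  rw [add_mulVec, smul_mulVec, one_mulVec, sum_mulVec]
  simp only [hsum, sum_ite, sum_const_zero, add_zero, sum_const, add_smul, Nat.cast_smul_eq_nsmul]

theorem dotProduct_inv_mulVec_sum_smul_of_orthonormal [DecidableEq n]
    (hq : ∀ i j, q i ⬝ᵥ q j = if i = j then (1 : ℝ) else 0) (ι : T → κ) {lam : ℝ}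
    (hlam : 0 < lam) (a : T → ℝ) (i : κ) :
    q i ⬝ᵥ ((lam • (1 : Matrix n n ℝ) + ∑ τ, vecMulVec (q (ι τ)) (q (ι τ)))⁻¹ *ᵥ
        ∑ τ, a τ • q (ι τ))
      = (lam + #{τ | ι τ = i})⁻¹ * ∑ τ with ι τ = i, a τ := by
  have hΛ := posDef_smul_one_add_sum_vecMulVec hlam fun τ => q (ι τ)
  rw [dotProduct_inv_mulVec_of_mulVec_eq_smul hΛ.isUnit
    (isHermitian_iff_isSymm.mp hΛ.isHermitian)
    (smul_one_add_sum_vecMulVec_mulVec_of_orthonormal hq ι lam i),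
    dotProduct_sum_smul_of_orthonormal hq]

end OrthonormalFeatures

theorem div_add_le_div_add_of_le {lam x t : ℝ} (hlam : 0 < lam) (hx : 0 ≤ x) (hxt : x ≤ t) :
    x / (x + lam) ≤ t / (t + lam) := by
  rw [div_le_div_iff₀ (by positivity) (by linarith)]
  nlinarith

theorem abs_inv_add_card_mul_sum_le {T : Type*} (s : Finset T) (a : T → ℝ) {lam K : ℝ}
    (hlam : 0 < lam) (hK : 0 ≤ K) (ha : ∀ τ ∈ s, |a τ| ≤ K) {t : ℝ} (hst : #s ≤ t) :
    |(lam + #s)⁻¹ * ∑ τ ∈ s, a τ| ≤ t / (t + lam) * K := by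
  calc |(lam + #s)⁻¹ * ∑ τ ∈ s, a τ| = (lam + #s)⁻¹ * |∑ τ ∈ s, a τ| := by
        rw [abs_mul, abs_of_pos (by positivity)]
    _ ≤ (lam + #s)⁻¹ * (#s * K) := by
        gcongr
        exact (abs_sum_le_sum_abs _ _).trans (by simpa using sum_le_card_nsmul s _ K ha)
    _ = #s / (#s + lam) * K := by ring
    _ ≤ t / (t + lam) * K :=
        mul_le_mul_of_nonneg_right (div_add_le_div_add_of_le hlam (by positivity) hst) hK

theorem stmt_16 {S : Type*} {d t : ℕ} (lam : ℝ) (hlam : 1 ≤ lam)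
    (q : Fin d → Fin d → ℝ)
    (hq : ∀ i j, q i ⬝ᵥ q j = if i = j then (1 : ℝ) else 0)
    (ι : Fin t → Fin d) (φ : Fin t → Fin d → ℝ) (hφ : ∀ τ, φ τ = q (ι τ))
    (cost : Fin t → ℝ) (s' : Fin t → S)
    (g : S → (Fin d → ℝ) → ℝ)
    (hg : ∀ s (w₁ w₂ : Fin d → ℝ),
      |g s w₁ - g s w₂| ≤ ‖(fun i => q i ⬝ᵥ (w₁ - w₂))‖)
    (Λ : Matrix (Fin d) (Fin d) ℝ)
    (hΛ : Λ = lam • (1 : Matrix (Fin d) (Fin d) ℝ) +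
      ∑ τ : Fin t, Matrix.vecMulVec (φ τ) (φ τ))
    (G : (Fin d → ℝ) → Fin d → ℝ)
    (hG : ∀ w, G w = Λ⁻¹ *ᵥ ∑ τ : Fin t, (cost τ + g (s' τ) w) • φ τ) :
    ∀ w₁ w₂ : Fin d → ℝ,
      ‖(fun i => q i ⬝ᵥ (G w₁ - G w₂))‖ ≤
        (t / (t + lam)) * ‖(fun i => q i ⬝ᵥ (w₁ - w₂))‖ := by
  intro w₁ w₂
  simp only [hφ] at hΛ hG
  have hdiff : G w₁ - G w₂ = Λ⁻¹ *ᵥ ∑ τ, (g (s' τ) w₁ - g (s' τ) w₂) • q (ι τ) := by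
    rw [hG, hG, ← mulVec_sub, ← sum_sub_distrib]
    simp only [← sub_smul, add_sub_add_left_eq_sub]
  refine (pi_norm_le_iff_of_nonneg (by positivity)).2 fun i => ?_
  rw [Real.norm_eq_abs, hdiff, hΛ, dotProduct_inv_mulVec_sum_smul_of_orthonormal hq ι (by linarith)]
  exact abs_inv_add_card_mul_sum_le _ _ (by linarith) (norm_nonneg _)
    (fun τ _ => hg (s' τ) w₁ w₂)
    (by simpa using card_filter_le univ (ι · = i))
end
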